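/- For every x ≥ 2 one has the representation μ(x)/(x(x−1)) = Λ({0})/2 + ∫_0^1 (1−z)^{x−2} (∫_z^1 T(y) dy) dz; consequently the function x ↦ μ(x)/(x(x−1)) is decreasing on [2,∞), and equivalently x ↦ κ(x)/(x−1) is decreasing on [2,∞). -/

import Mathlib

open MeasureTheory Real Set Filter Topology

/-- The integrand of `mu`, with its continuous extension `x(x-1)/2` at `p = 0`. -/
noncomputable def muInt (x p : ℝ) : ℝ :=
  if p = 0 then x * (x - 1) / 2
  else (x * p - 1 + (1 - p) ^ x) / p ^ 2

/-- The rate of decrease `μ(x)` of the `Λ`-coalescent. -/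
noncomputable def mu (Λ : Measure ℝ) (x : ℝ) : ℝ :=
  ∫ p in Set.Icc (0:ℝ) 1, muInt x p ∂Λ

/-- The rate of decrease per capita `κ(x) = μ(x)/x`. -/
noncomputable def kappa (Λ : Measure ℝ) (x : ℝ) : ℝ := mu Λ x / x

/-- `T(y) = ∫_{(y,1]} p⁻² Λ(dp)`. -/
noncomputable def T (Λ : Measure ℝ) (y : ℝ) : ℝ :=
  ∫ p in Set.Ioc y 1, 1 / p ^ 2 ∂Λ

open scoped ENNReal

/-!
For `0 < p ≤ 1` the fundamental theorem of calculus gives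
`(x p - 1 + (1 - p)^x) / (x (x - 1)) = ∫₀ᵖ (1 - z)^(x-2) (p - z) / p² dz`, and
`(p - z) / p² = ∫_z^p p⁻² dy`. Integrating against `Λ` over `(0, 1]` and exchanging the order of
integration over the region `0 < z < y < p ≤ 1` (Tonelli) yields the representation, while the
atom of `Λ` at `0`, where the integrand is `x (x - 1) / 2`, contributes `Λ({0}) / 2`.
Monotonicity already holds for each `p` separately, since `(1 - z)^(x-2)` decreases in `x`.
-/

theorem continuous_one_sub_rpow_mul {x : ℝ} (hx : 2 ≤ x) (p : ℝ) :
    Continuous fun z : ℝ => (1 - z) ^ (x - 2) * (p - z) := by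
  have := Real.continuous_rpow_const (q := x - 2) (by linarith)
  fun_prop

theorem integral_one_sub_rpow_mul {x p : ℝ} (hx : 2 ≤ x) (hp₀ : 0 ≤ p) (hp₁ : p ≤ 1) :
    ∫ z in (0:ℝ)..p, (1 - z) ^ (x - 2) * (p - z) = (x * p - 1 + (1 - p) ^ x) / (x * (x - 1)) := by
  have hx₀ : x ≠ 0 := by positivity
  have hx₁ : x - 1 ≠ 0 := by linarith
  have hderiv : ∀ z ∈ uIcc 0 p, HasDerivAt
      (fun z => -((1 - z) ^ x / x) + (1 - p) * (1 - z) ^ (x - 1) / (x - 1))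
      ((1 - z) ^ (x - 2) * (p - z)) z := by
    intro z hz
    rw [uIcc_of_le hp₀] at hz
    have hz₁ : 0 ≤ 1 - z := by linarith [hz.2]
    have hsub : HasDerivAt (fun z : ℝ => 1 - z) (-1) z := (hasDerivAt_id z).const_sub 1
    have h₁ := (Real.hasDerivAt_rpow_const (p := x) (Or.inr (by linarith))).comp z hsub
    have h₂ := (Real.hasDerivAt_rpow_const (p := x - 1) (Or.inr (by linarith))).comp z hsub
    refine ((h₁.div_const x).neg.add ((h₂.const_mul (1 - p)).div_const (x - 1))).congr_deriv ?_
    have hpow : (1 - z) ^ (x - 1) = (1 - z) ^ (x - 2) * (1 - z) := by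
      rw [← Real.rpow_add_one' hz₁ (by linarith)]; ring_nf
    rw [show x - 1 - 1 = x - 2 by ring, hpow]
    field_simp
    ring
  rw [intervalIntegral.integral_eq_sub_of_hasDerivAt hderiv
    ((continuous_one_sub_rpow_mul hx p).intervalIntegrable _ _)]
  have hpow : (1 - p) * (1 - p) ^ (x - 1) = (1 - p) ^ x := by
    rw [mul_comm, ← Real.rpow_add_one' (by linarith) (by linarith)]; ring_nf
  simp only [sub_zero, Real.one_rpow, hpow]
  field_simp
  ring

theorem muInt_div_eq_integral {x p : ℝ} (hx : 2 ≤ x) (hp : p ∈ Ioc 0 1) :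
    muInt x p / (x * (x - 1)) = ∫ z in (0:ℝ)..p, (1 - z) ^ (x - 2) * (p - z) / p ^ 2 := by
  have hx₀ : x ≠ 0 := by positivity
  have hx₁ : x - 1 ≠ 0 := by linarith
  rw [intervalIntegral.integral_div, integral_one_sub_rpow_mul hx hp.1.le hp.2, muInt,
    if_neg hp.1.ne']
  field_simp

theorem muInt_zero_div {x : ℝ} (hx : 2 ≤ x) : muInt x 0 / (x * (x - 1)) = 1 / 2 := by
  have hx₀ : x ≠ 0 := by positivity
  have hx₁ : x - 1 ≠ 0 := by linarith
  rw [muInt, if_pos rfl]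
  field_simp

theorem muInt_div_mem_Icc {x p : ℝ} (hx : 2 ≤ x) (hp : p ∈ Icc 0 1) :
    muInt x p / (x * (x - 1)) ∈ Icc 0 (1 / 2) := by
  rcases hp.1.eq_or_lt with rfl | hp₀
  · rw [muInt_zero_div hx]
    norm_num
  have hp₀' : p ^ 2 ≠ 0 := by positivity
  rw [muInt_div_eq_integral hx ⟨hp₀, hp.2⟩]
  have hint := ((continuous_one_sub_rpow_mul hx p).div_const (p ^ 2)).intervalIntegrable
    (μ := volume) 0 p
  refine ⟨?_, ?_⟩
  · refine intervalIntegral.integral_nonneg hp₀.le fun z hz => ?_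
    have : 0 ≤ 1 - z := by linarith [hz.2, hp.2]
    have : 0 ≤ p - z := by linarith [hz.2]
    positivity
  · calc ∫ z in (0:ℝ)..p, (1 - z) ^ (x - 2) * (p - z) / p ^ 2
        ≤ ∫ z in (0:ℝ)..p, (p - z) / p ^ 2 := by
          refine intervalIntegral.integral_mono_on hp₀.le hint
            ((by fun_prop : Continuous fun z : ℝ => (p - z) / p ^ 2).intervalIntegrable _ _)
            fun z hz => ?_
          have : (1 - z) ^ (x - 2) ≤ 1 :=
            Real.rpow_le_one (by linarith [hz.2, hp.2]) (by linarith [hz.1]) (by linarith)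
          gcongr
          exact mul_le_of_le_one_left (by linarith [hz.2]) this
      _ = 1 / 2 := by
          simp [intervalIntegral.integral_comp_sub_left fun z => z]
          field_simp

theorem antitoneOn_muInt_div {p : ℝ} (hp : p ∈ Icc 0 1) :
    AntitoneOn (fun x => muInt x p / (x * (x - 1))) (Ici 2) := by
  intro a ha b hb hab
  rcases hp.1.eq_or_lt with rfl | hp₀
  · simp only [muInt_zero_div ha, muInt_zero_div hb, le_refl]
  simp only [muInt_div_eq_integral ha ⟨hp₀, hp.2⟩, muInt_div_eq_integral hb ⟨hp₀, hp.2⟩]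
  refine intervalIntegral.integral_mono_on hp₀.le
    (((continuous_one_sub_rpow_mul hb p).div_const _).intervalIntegrable _ _)
    (((continuous_one_sub_rpow_mul ha p).div_const _).intervalIntegrable _ _) fun z hz => ?_
  have : 0 ≤ p - z := by linarith [hz.2]
  have : (1 - z) ^ (b - 2) ≤ (1 - z) ^ (a - 2) :=
    Real.rpow_le_rpow_of_exponent_ge' (by linarith [hz.2, hp.2]) (by linarith [hz.1])
      (by linarith [ha.out]) (by linarith)
  gcongr

theorem lintegral_Ioc_lintegral_Ioo_comm {μ ν : Measure ℝ} [SFinite μ] [SFinite ν]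
    {f : ℝ → ℝ → ℝ≥0∞} (hf : Measurable (Function.uncurry f)) (a b : ℝ) :
    ∫⁻ p in Ioc a b, ∫⁻ z in Ioo a p, f p z ∂ν ∂μ =
      ∫⁻ z in Ioc a b, ∫⁻ p in Ioc z b, f p z ∂μ ∂ν := by
  have hl : EqOn (fun p => ∫⁻ z in Ioo a p, f p z ∂ν)
      (fun p => ∫⁻ z in Ioc a b, (Iio p).indicator (f p) z ∂ν) (Ioc a b) := fun p hp => by
    dsimp only
    rw [lintegral_indicator measurableSet_Iio, Measure.restrict_restrict measurableSet_Iio]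
    congr 2
    ext z
    simp only [mem_inter_iff, mem_Iio, mem_Ioc, mem_Ioo]
    exact ⟨fun h => ⟨h.2, h.1, h.2.le.trans hp.2⟩, fun h => ⟨h.2.1, h.1⟩⟩
  have hr : EqOn (fun z => ∫⁻ p in Ioc z b, f p z ∂μ)
      (fun z => ∫⁻ p in Ioc a b, (Ioi z).indicator (f · z) p ∂μ) (Ioc a b) := fun z hz => by
    dsimp only
    rw [lintegral_indicator measurableSet_Ioi, Measure.restrict_restrict measurableSet_Ioi,
      inter_comm, Ioc_inter_Ioi, max_eq_right hz.1.le]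
  rw [setLIntegral_congr_fun measurableSet_Ioc hl, setLIntegral_congr_fun measurableSet_Ioc hr]
  -- both indicators are, definitionally, `f` restricted to `{(p, z) | z < p}`
  exact lintegral_lintegral_swap
    (hf.indicator (measurableSet_lt measurable_snd measurable_fst)).aemeasurable

theorem integrableOn_one_div_sq_Ioi (Λ : Measure ℝ) [IsFiniteMeasure Λ] {y : ℝ} (hy : 0 < y) :
    IntegrableOn (fun p : ℝ => 1 / p ^ 2) (Ioi y) Λ := by
  refine Measure.integrableOn_of_bounded (M := 1 / y ^ 2) (measure_ne_top _ _)
    (by fun_prop : Measurable fun p : ℝ => 1 / p ^ 2).aestronglyMeasurable ?_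
  filter_upwards [ae_restrict_mem measurableSet_Ioi] with p hp
  have hp₀ : 0 < p := hy.trans hp
  rw [Real.norm_of_nonneg (by positivity)]
  gcongr
  exact hp.le

theorem T_nonneg (Λ : Measure ℝ) (y : ℝ) : 0 ≤ T Λ y :=
  integral_nonneg fun p => by positivity

section T

variable (Λ : Measure ℝ) [IsFiniteMeasure Λ]

theorem ofReal_T {y : ℝ} (hy : 0 < y) :
    ENNReal.ofReal (T Λ y) = ∫⁻ p in Ioc y 1, ENNReal.ofReal (1 / p ^ 2) ∂Λ :=
  ofReal_integral_eq_lintegral_ofReal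
    ((integrableOn_one_div_sq_Ioi Λ hy).mono_set Ioc_subset_Ioi_self)
    (Eventually.of_forall fun p => by positivity)

theorem T_antitoneOn : AntitoneOn (T Λ) (Ioi 0) := fun y₁ hy₁ _ _ hy =>
  setIntegral_mono_set ((integrableOn_one_div_sq_Ioi Λ hy₁).mono_set Ioc_subset_Ioi_self)
    (Eventually.of_forall fun p => by positivity) (Ioc_subset_Ioc_left hy).eventuallyLE

theorem intervalIntegrable_T {a b : ℝ} (ha : 0 < a) (hb : 0 < b) :
    IntervalIntegrable (T Λ) volume a b :=
  ((T_antitoneOn Λ).mono fun _ hy => lt_of_lt_of_le (lt_min ha hb) hy.1).intervalIntegrable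

theorem antitoneOn_integral_T : AntitoneOn (fun z => ∫ y in z..1, T Λ y) (Ioi 0) := by
  intro z₁ hz₁ z₂ hz₂ hz
  dsimp only
  rw [← intervalIntegral.integral_add_adjacent_intervals (intervalIntegrable_T Λ hz₁ hz₂)
    (intervalIntegrable_T Λ hz₂ one_pos)]
  exact le_add_of_nonneg_left (intervalIntegral.integral_nonneg hz fun y _ => T_nonneg Λ y)

theorem ofReal_integral_T {z : ℝ} (hz : z ∈ Ioc 0 1) :
    ENNReal.ofReal (∫ y in z..1, T Λ y) = ∫⁻ p in Ioc z 1, ENNReal.ofReal ((p - z) / p ^ 2) ∂Λ :=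
  calc ENNReal.ofReal (∫ y in z..1, T Λ y)
      = ∫⁻ y in Ioc z 1, ENNReal.ofReal (T Λ y) := by
        rw [intervalIntegral.integral_of_le hz.2, ofReal_integral_eq_lintegral_ofReal
          ((intervalIntegrable_iff_integrableOn_Ioc_of_le hz.2).1
            (intervalIntegrable_T Λ hz.1 one_pos))
          (Eventually.of_forall (T_nonneg Λ))]
    _ = ∫⁻ y in Ioc z 1, ∫⁻ p in Ioc y 1, ENNReal.ofReal (1 / p ^ 2) ∂Λ :=
        setLIntegral_congr_fun measurableSet_Ioc fun y hy => ofReal_T Λ (hz.1.trans hy.1)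
    _ = ∫⁻ p in Ioc z 1, (∫⁻ _ in Ioo z p, ENNReal.ofReal (1 / p ^ 2)) ∂Λ :=
        (lintegral_Ioc_lintegral_Ioo_comm (f := fun p _ => ENNReal.ofReal (1 / p ^ 2))
          (by fun_prop) z 1).symm
    _ = ∫⁻ p in Ioc z 1, ENNReal.ofReal ((p - z) / p ^ 2) ∂Λ := by
        refine setLIntegral_congr_fun measurableSet_Ioc fun p hp => ?_
        rw [setLIntegral_const, Real.volume_Ioo, ← ENNReal.ofReal_mul (by positivity)]
        ring_nf

end T

theorem measurable_muInt (x : ℝ) : Measurable (muInt x) :=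
  Measurable.ite (measurableSet_singleton 0) measurable_const (by fun_prop)

theorem mu_div_eq_integral (Λ : Measure ℝ) (x : ℝ) :
    mu Λ x / (x * (x - 1)) = ∫ p in Icc 0 1, muInt x p / (x * (x - 1)) ∂Λ :=
  (integral_div _ _).symm

section Mu

variable (Λ : Measure ℝ) [IsFiniteMeasure Λ] {x : ℝ}

theorem integrableOn_muInt_div (hx : 2 ≤ x) :
    IntegrableOn (fun p => muInt x p / (x * (x - 1))) (Icc 0 1) Λ := by
  refine Measure.integrableOn_of_bounded (M := 1 / 2) (measure_ne_top _ _)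
    ((measurable_muInt x).div_const _).aestronglyMeasurable ?_
  filter_upwards [ae_restrict_mem measurableSet_Icc] with p hp
  have := muInt_div_mem_Icc hx hp
  rw [Real.norm_of_nonneg this.1]
  exact this.2

theorem antitoneOn_mu_div : AntitoneOn (fun x => mu Λ x / (x * (x - 1))) (Ici 2) :=
  fun a ha b hb hab => by
    simp only [mu_div_eq_integral]
    exact setIntegral_mono_on (integrableOn_muInt_div Λ hb) (integrableOn_muInt_div Λ ha)
      measurableSet_Icc fun p hp => antitoneOn_muInt_div hp ha hb hab

theorem mu_div_eq_atom_add (hx : 2 ≤ x) :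
    mu Λ x / (x * (x - 1)) =
      (Λ {0}).toReal / 2 + ∫ p in Ioc 0 1, muInt x p / (x * (x - 1)) ∂Λ := by
  have hint := integrableOn_muInt_div Λ hx
  rw [mu_div_eq_integral, ← Ioc_insert_left zero_le_one, insert_eq,
    setIntegral_union (by simp) measurableSet_Ioc (hint.mono_set (by simp))
      (hint.mono_set Ioc_subset_Icc_self),
    integral_singleton, muInt_zero_div hx, measureReal_def, smul_eq_mul, mul_one_div]

theorem lintegral_muInt_div_eq (hx : 2 ≤ x) :
    ∫⁻ p in Ioc 0 1, ENNReal.ofReal (muInt x p / (x * (x - 1))) ∂Λ =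
      ∫⁻ z in Ioc 0 1, ENNReal.ofReal ((1 - z) ^ (x - 2) * ∫ y in z..1, T Λ y) :=
  calc ∫⁻ p in Ioc 0 1, ENNReal.ofReal (muInt x p / (x * (x - 1))) ∂Λ
      = ∫⁻ p in Ioc 0 1, ∫⁻ z in Ioo 0 p,
          ENNReal.ofReal ((1 - z) ^ (x - 2)) * ENNReal.ofReal ((p - z) / p ^ 2) ∂volume ∂Λ := by
        refine setLIntegral_congr_fun measurableSet_Ioc fun p hp => ?_
        rw [muInt_div_eq_integral hx hp, intervalIntegral.integral_of_le hp.1.le,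
          integral_Ioc_eq_integral_Ioo, ofReal_integral_eq_lintegral_ofReal
            (((continuous_one_sub_rpow_mul hx p).div_const _).integrableOn_Icc.mono_set
              Ioo_subset_Icc_self) ?_]
        · refine setLIntegral_congr_fun measurableSet_Ioo fun z hz => ?_
          rw [mul_div_assoc, ENNReal.ofReal_mul (Real.rpow_nonneg (by linarith [hz.2, hp.2]) _)]
        · filter_upwards [ae_restrict_mem measurableSet_Ioo] with z hz
          have : 0 ≤ 1 - z := by linarith [hz.2, hp.2]
          have : 0 ≤ p - z := by linarith [hz.2]
          positivity
    _ = ∫⁻ z in Ioc 0 1, ∫⁻ p in Ioc z 1,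
          ENNReal.ofReal ((1 - z) ^ (x - 2)) * ENNReal.ofReal ((p - z) / p ^ 2) ∂Λ ∂volume :=
        lintegral_Ioc_lintegral_Ioo_comm (by fun_prop) 0 1
    _ = ∫⁻ z in Ioc 0 1, ENNReal.ofReal ((1 - z) ^ (x - 2) * ∫ y in z..1, T Λ y) := by
        refine setLIntegral_congr_fun measurableSet_Ioc fun z hz => ?_
        rw [lintegral_const_mul _ (by fun_prop), ← ofReal_integral_T Λ hz,
          ENNReal.ofReal_mul (Real.rpow_nonneg (by linarith [hz.2]) _)]

theorem integral_muInt_div_eq (hx : 2 ≤ x) :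
    ∫ p in Ioc 0 1, muInt x p / (x * (x - 1)) ∂Λ =
      ∫ z in (0:ℝ)..1, (1 - z) ^ (x - 2) * ∫ y in z..1, T Λ y := by
  have hmeas : AEStronglyMeasurable (fun z => (1 - z) ^ (x - 2) * ∫ y in z..1, T Λ y)
      (volume.restrict (Ioc 0 1)) :=
    ((by fun_prop : Measurable fun z : ℝ => (1 - z) ^ (x - 2)).aemeasurable.mul
      (aemeasurable_restrict_of_antitoneOn measurableSet_Ioc
        ((antitoneOn_integral_T Λ).mono Ioc_subset_Ioi_self))).aestronglyMeasurable
  rw [intervalIntegral.integral_of_le zero_le_one,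
    integral_eq_lintegral_of_nonneg_ae ?_ ((measurable_muInt x).div_const _).aestronglyMeasurable,
    integral_eq_lintegral_of_nonneg_ae ?_ hmeas, lintegral_muInt_div_eq Λ hx]
  · filter_upwards [ae_restrict_mem measurableSet_Ioc] with z hz
    exact mul_nonneg (Real.rpow_nonneg (by linarith [hz.2]) _)
      (intervalIntegral.integral_nonneg hz.2 fun y _ => T_nonneg Λ y)
  · filter_upwards [ae_restrict_mem measurableSet_Ioc] with p hp
    exact (muInt_div_mem_Icc hx ⟨hp.1.le, hp.2⟩).1

end Mu

theorem mu_div_repr_and_antitone (Λ : Measure ℝ) [IsFiniteMeasure Λ] :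
    (∀ x : ℝ, 2 ≤ x →
      mu Λ x / (x * (x - 1)) =
        (Λ {0}).toReal / 2 +
          ∫ z in (0:ℝ)..1, (1 - z) ^ (x - 2) * ∫ y in z..1, T Λ y) ∧
    AntitoneOn (fun x => mu Λ x / (x * (x - 1))) (Set.Ici 2) ∧
    AntitoneOn (fun x => kappa Λ x / (x - 1)) (Set.Ici 2) :=
  ⟨fun _ hx => by rw [mu_div_eq_atom_add Λ hx, integral_muInt_div_eq Λ hx],
    antitoneOn_mu_div Λ, by simpa only [kappa, div_div] using antitoneOn_mu_div Λ⟩
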